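/- Let f : S → E be a strictly increasing function from a set S of epsilon numbers into the epsilon numbers. Then the assignment x ↦ x[f], defined on A = {x : Ep(x) ⊆ S}, is injective. -/

import Mathlib

open Ordinal

/-- An ordinal is an epsilon number if it is a fixed point of `ω ^ ·`. -/
def IsEpsilon (x : Ordinal.{0}) : Prop := ω ^ x = x

theorem cnf_fst_lt {x : Ordinal.{0}} (h : ¬ ω ^ x = x) {p : Ordinal × Ordinal}
    (hp : p ∈ CNF ω x) : p.1 < x := by
  have hx : x ≠ 0 := by
    rintro rfl
    simp [Ordinal.CNF.zero_right] at hp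
  have h1 : p.1 ≤ Ordinal.log ω x := Ordinal.CNF.fst_le_log hp
  have h2 : Ordinal.log ω x < x := by
    rcases lt_or_eq_of_le (Ordinal.log_le_self ω x) with h' | h'
    · exact h'
    · exfalso
      have hle := Ordinal.opow_log_le_self ω hx
      rw [h'] at hle
      exact h (le_antisymm hle (Ordinal.right_le_opow x one_lt_omega0))
  exact lt_of_le_of_lt h1 h2

open scoped Classical in
/-- The set of epsilon numbers occurring hereditarily in the Cantor normal form of `x`. -/
noncomputable def Ep (x : Ordinal.{0}) : Set Ordinal.{0} :=
  if h : ω ^ x = x then {x}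
  else ⋃ p : {q // q ∈ CNF ω x}, Ep p.1.1
termination_by x
decreasing_by exact cnf_fst_lt h p.2

open scoped Classical in
/-- Simultaneous substitution of the epsilon numbers occurring hereditarily in the
Cantor normal form of `x` by their values under `f`. -/
noncomputable def subst (f : Ordinal.{0} → Ordinal.{0}) (x : Ordinal.{0}) : Ordinal.{0} :=
  if h : ω ^ x = x then f x
  else (((CNF ω x).attach).map (fun p => ω ^ subst f p.1.1 * p.1.2)).sum
termination_by x
decreasing_by exact cnf_fst_lt h p.2

/-!
`x ↦ x[f]` is in fact strictly increasing on `{x | Ep x ⊆ S}`. Write a nonzero `x` as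
`ω ^ e * c + r` with `e = log ω x`, `0 < c < ω` and `r < ω ^ e`; then `x[f] = ω ^ e[f] * c + r[f]`,
also when `x` is an epsilon number. By induction, once `x[f]` is strictly increasing below `x`,
`r[f] < ω ^ e[f]`, so `x[f]` again has leading exponent `e[f]` and leading coefficient `c`, and
comparing `x[f]` with `y[f]` reduces to comparing leading exponents, coefficients and remainders.
If `y` is an epsilon number and `x < y`, every epsilon number in `Ep x` is at most `x`, so `f` maps
it below the epsilon number `f y`, which is closed under `(a, c, b) ↦ ω ^ a * c + b`.
-/

open Set

namespace IsEpsilon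

variable {x : Ordinal.{0}}

theorem opow_eq (h : IsEpsilon x) : ω ^ x = x := h

theorem ne_zero (h : IsEpsilon x) : x ≠ 0 := by
  rintro rfl
  simp [IsEpsilon] at h

theorem pos (h : IsEpsilon x) : 0 < x :=
  pos_iff_ne_zero.2 h.ne_zero

theorem log_eq (h : IsEpsilon x) : log ω x = x := by
  conv_lhs => rw [← h.opow_eq]
  exact log_opow one_lt_omega0 x

theorem cnf_eq (h : IsEpsilon x) : CNF ω x = [(x, 1)] := by
  rw [CNF.ne_zero h.ne_zero, h.log_eq, h.opow_eq, div_self h.ne_zero, mod_self, CNF.zero_right]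

theorem opow_mul_add_lt {a b c : Ordinal.{0}} (hx : IsEpsilon x) (ha : a < x) (hc : c < ω)
    (hb : b < x) : ω ^ a * c + b < x := by
  have hadd := isPrincipal_add_omega0_opow x
  rw [hx.opow_eq] at hadd
  exact hadd (hx.opow_eq ▸ opow_mul_lt_opow hc ha) hb

end IsEpsilon

theorem log_lt_self_of_not_isEpsilon {x : Ordinal.{0}} (h : ¬IsEpsilon x) (hx : x ≠ 0) :
    log ω x < x := by
  refine (log_le_self ω x).lt_of_ne fun heq => h (le_antisymm ?_ (right_le_opow x one_lt_omega0))
  simpa [heq] using opow_log_le_self ω hx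

theorem mod_lt_mod_of_lt_of_div_eq {a b d : Ordinal} (hab : a < b) (hdiv : a / d = b / d) :
    a % d < b % d := by
  rw [← div_add_mod a d, ← div_add_mod b d, hdiv] at hab
  exact (add_lt_add_iff_left _).1 hab

theorem Ep_of_isEpsilon {x : Ordinal.{0}} (h : IsEpsilon x) : Ep x = {x} := by
  rw [Ep, dif_pos h.opow_eq]

theorem IsEpsilon.mem_Ep {x : Ordinal.{0}} (h : IsEpsilon x) : x ∈ Ep x := by
  rw [Ep_of_isEpsilon h]
  rfl

theorem biUnion_cnf_Ep (x : Ordinal.{0}) : ⋃ p ∈ CNF ω x, Ep p.1 = Ep x := by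
  by_cases h : IsEpsilon x
  · simp [h.cnf_eq]
  · rw [Ep, dif_neg (show ¬ω ^ x = x from h), iUnion_subtype]

@[simp]
theorem Ep_zero : Ep 0 = ∅ := by
  rw [← biUnion_cnf_Ep, CNF.zero_right]
  simp

theorem Ep_eq_union (x : Ordinal.{0}) : Ep x = Ep (log ω x) ∪ Ep (x % ω ^ log ω x) := by
  rcases eq_or_ne x 0 with rfl | hx
  · simp
  · conv_lhs => rw [← biUnion_cnf_Ep, CNF.ne_zero hx]
    simp [biUnion_cnf_Ep]

theorem Ep_log_subset (x : Ordinal.{0}) : Ep (log ω x) ⊆ Ep x :=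
  (Ep_eq_union x).symm ▸ subset_union_left

theorem Ep_mod_subset (x : Ordinal.{0}) : Ep (x % ω ^ log ω x) ⊆ Ep x :=
  (Ep_eq_union x).symm ▸ subset_union_right

theorem le_of_mem_Ep {e x : Ordinal.{0}} (he : e ∈ Ep x) : e ≤ x := by
  induction x using WellFoundedLT.induction with
  | _ x ih =>
  by_cases h : IsEpsilon x
  · rw [Ep_of_isEpsilon h] at he
    exact he.le
  have hx : x ≠ 0 := by
    rintro rfl
    simp at he
  rw [Ep_eq_union] at he
  rcases he with he | he
  · exact (ih _ (log_lt_self_of_not_isEpsilon h hx) he).trans (log_le_self ω x)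
  · have hmod := mod_opow_log_lt_self ω hx
    exact (ih _ hmod he).trans hmod.le

section Subst

variable {f : Ordinal.{0} → Ordinal.{0}} {x : Ordinal.{0}}

theorem subst_of_isEpsilon (h : IsEpsilon x) : subst f x = f x := by
  rw [subst, dif_pos h.opow_eq]

theorem subst_of_not_isEpsilon (h : ¬IsEpsilon x) :
    subst f x = ((CNF ω x).map fun p => ω ^ subst f p.1 * p.2).sum := by
  rw [subst, dif_neg (show ¬ω ^ x = x from h)]
  exact congrArg List.sum (List.attach_map_val (f := fun p : Ordinal × Ordinal => ω ^ subst f p.1 * p.2))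

@[simp]
theorem subst_zero : subst f 0 = 0 := by
  rw [subst_of_not_isEpsilon fun h => h.ne_zero rfl, CNF.zero_right, List.map_nil, List.sum_nil]

variable {S : Set Ordinal.{0}}

/-- At an epsilon number `x` the sum is `ω ^ f x * 1 = f x`, so it computes `subst f x` there too. -/
theorem subst_eq_sum_cnf (hfE : ∀ e ∈ S, IsEpsilon (f e)) (hE : Ep x ⊆ S) :
    subst f x = ((CNF ω x).map fun p => ω ^ subst f p.1 * p.2).sum := by
  by_cases h : IsEpsilon x
  · have hfx : IsEpsilon (f x) := hfE x (hE h.mem_Ep)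
    simp [h.cnf_eq, subst_of_isEpsilon h, hfx.opow_eq]
  · exact subst_of_not_isEpsilon h

theorem subst_eq_opow_mul_add (hfE : ∀ e ∈ S, IsEpsilon (f e)) (hx : x ≠ 0) (hE : Ep x ⊆ S) :
    subst f x = ω ^ subst f (log ω x) * (x / ω ^ log ω x) + subst f (x % ω ^ log ω x) := by
  rw [subst_eq_sum_cnf hfE hE, CNF.ne_zero hx, List.map_cons, List.sum_cons,
    subst_eq_sum_cnf hfE ((Ep_mod_subset x).trans hE)]

end Subst

section StrictMono

variable {S : Set Ordinal.{0}} {f : Ordinal.{0} → Ordinal.{0}} {x : Ordinal.{0}}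

theorem opow_subst_log_le_subst (hfE : ∀ e ∈ S, IsEpsilon (f e)) (hx : x ≠ 0)
    (hE : Ep x ⊆ S) : ω ^ subst f (log ω x) ≤ subst f x := by
  rw [subst_eq_opow_mul_add hfE hx hE]
  exact (le_mul_left _ (div_opow_log_pos ω hx)).trans le_self_add

theorem subst_pos (hfE : ∀ e ∈ S, IsEpsilon (f e)) (hx : x ≠ 0) (hE : Ep x ⊆ S) :
    0 < subst f x :=
  (opow_pos _ omega0_pos).trans_le (opow_subst_log_le_subst hfE hx hE)

theorem subst_lt_of_forall_mem_Ep_lt (hfE : ∀ e ∈ S, IsEpsilon (f e)) {ε : Ordinal}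
    (hε : IsEpsilon ε) (hE : Ep x ⊆ S) (hlt : ∀ e ∈ Ep x, f e < ε) : subst f x < ε := by
  induction x using WellFoundedLT.induction with
  | _ x ih =>
  by_cases h : IsEpsilon x
  · rw [subst_of_isEpsilon h]
    exact hlt x h.mem_Ep
  rcases eq_or_ne x 0 with rfl | hx
  · rw [subst_zero]
    exact hε.pos
  rw [subst_eq_opow_mul_add hfE hx hE]
  refine hε.opow_mul_add_lt ?_ (div_opow_log_lt x one_lt_omega0) ?_
  · exact ih _ (log_lt_self_of_not_isEpsilon h hx) ((Ep_log_subset x).trans hE)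
      fun e he => hlt e (Ep_log_subset x he)
  · exact ih _ (mod_opow_log_lt_self ω hx) ((Ep_mod_subset x).trans hE)
      fun e he => hlt e (Ep_mod_subset x he)

theorem subst_mod_opow_log_lt (hfE : ∀ e ∈ S, IsEpsilon (f e))
    (hmono : StrictMonoOn (subst f) ({z | Ep z ⊆ S} ∩ Iio x)) (hE : Ep x ⊆ S) :
    subst f (x % ω ^ log ω x) < ω ^ subst f (log ω x) := by
  induction x using WellFoundedLT.induction with
  | _ x ih =>
  set r := x % ω ^ log ω x with hr_def
  rcases eq_or_ne r 0 with hr | hr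
  · rw [hr, subst_zero]
    exact opow_pos _ omega0_pos
  have hx : x ≠ 0 := by
    rintro rfl
    simp [r] at hr
  have hlog : log ω x < x := by
    refine log_lt_self_of_not_isEpsilon (fun h => hr ?_) hx
    rw [hr_def, h.log_eq, h.opow_eq, mod_self]
  have hrx : r < x := mod_opow_log_lt_self ω hx
  have hEr : Ep r ⊆ S := (Ep_mod_subset x).trans hE
  have hlog_r : log ω r < log ω x :=
    (lt_opow_iff_log_lt one_lt_omega0 hr).1 (mod_lt _ (opow_ne_zero _ omega0_ne_zero))
  rw [subst_eq_opow_mul_add hfE hr hEr]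
  refine opow_mul_add_lt_opow (div_opow_log_lt r one_lt_omega0) ?_ ?_
  · exact ih r hrx (hmono.mono (inter_subset_inter_right _ (Iio_subset_Iio hrx.le))) hEr
  · exact hmono ⟨(Ep_log_subset r).trans hEr, (log_le_self ω r).trans_lt hrx⟩
      ⟨(Ep_log_subset x).trans hE, hlog⟩ hlog_r

theorem subst_lt_opow_subst_log_add_one (hfE : ∀ e ∈ S, IsEpsilon (f e))
    (hmono : StrictMonoOn (subst f) ({z | Ep z ⊆ S} ∩ Iio x)) (hx : x ≠ 0) (hE : Ep x ⊆ S) :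
    subst f x < ω ^ (subst f (log ω x) + 1) := by
  rw [subst_eq_opow_mul_add hfE hx hE]
  exact opow_mul_add_lt_opow (div_opow_log_lt x one_lt_omega0)
    (subst_mod_opow_log_lt hfE hmono hE) (lt_add_one _)

theorem subst_lt_subst_of_strictMonoOn_Iio (hfE : ∀ e ∈ S, IsEpsilon (f e))
    (hf : StrictMonoOn f S) {y : Ordinal.{0}}
    (hmono : StrictMonoOn (subst f) ({z | Ep z ⊆ S} ∩ Iio y)) (hEy : Ep y ⊆ S)
    (hEx : Ep x ⊆ S) (hxy : x < y) : subst f x < subst f y := by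
  have hy : y ≠ 0 := hxy.ne_bot
  by_cases hyε : IsEpsilon y
  · rw [subst_of_isEpsilon hyε]
    exact subst_lt_of_forall_mem_Ep_lt hfE (hfE y (hEy hyε.mem_Ep)) hEx fun e he =>
      hf (hEx he) (hEy hyε.mem_Ep) ((le_of_mem_Ep he).trans_lt hxy)
  rcases eq_or_ne x 0 with rfl | hx
  · rw [subst_zero]
    exact subst_pos hfE hy hEy
  have hmono_x : StrictMonoOn (subst f) ({z | Ep z ⊆ S} ∩ Iio x) :=
    hmono.mono (inter_subset_inter_right _ (Iio_subset_Iio hxy.le))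
  have hlog_y : log ω y < y := log_lt_self_of_not_isEpsilon hyε hy
  rcases (log_mono_right ω hxy.le).lt_or_eq with hlog | hlog
  · have hsubst_log : subst f (log ω x) < subst f (log ω y) :=
      hmono ⟨(Ep_log_subset x).trans hEx, hlog.trans hlog_y⟩
        ⟨(Ep_log_subset y).trans hEy, hlog_y⟩ hlog
    calc subst f x < ω ^ (subst f (log ω x) + 1) :=
          subst_lt_opow_subst_log_add_one hfE hmono_x hx hEx
      _ ≤ ω ^ subst f (log ω y) :=
          opow_le_opow_right omega0_pos (Order.add_one_le_of_lt hsubst_log)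
      _ ≤ subst f y := opow_subst_log_le_subst hfE hy hEy
  have hmod_x := subst_mod_opow_log_lt hfE hmono_x hEx
  have hdiv : x / ω ^ log ω x ≤ y / ω ^ log ω y := hlog ▸ div_le_left hxy.le _
  rw [subst_eq_opow_mul_add hfE hx hEx, subst_eq_opow_mul_add hfE hy hEy]
  rw [hlog] at hmod_x hdiv ⊢
  rcases hdiv.lt_or_eq with hdiv | hdiv
  · exact (opow_mul_add_lt_opow_mul hmod_x hdiv).trans_le le_self_add
  · rw [hdiv]
    refine (add_lt_add_iff_left _).2 (hmono ⟨?_, ?_⟩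
      ⟨(Ep_mod_subset y).trans hEy, mod_opow_log_lt_self ω hy⟩ (mod_lt_mod_of_lt_of_div_eq hxy hdiv))
    · exact hlog ▸ (Ep_mod_subset x).trans hEx
    · exact hlog ▸ (mod_opow_log_lt_self ω hx).trans hxy

theorem strictMonoOn_subst (hfE : ∀ e ∈ S, IsEpsilon (f e)) (hf : StrictMonoOn f S) :
    StrictMonoOn (subst f) {x | Ep x ⊆ S} := by
  have hmono (y : Ordinal.{0}) : StrictMonoOn (subst f) ({z | Ep z ⊆ S} ∩ Iio y) := by
    induction y using WellFoundedLT.induction with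
    | _ y ih =>
    rintro x ⟨hEx, -⟩ z ⟨hEz, hzy⟩ hxz
    exact subst_lt_subst_of_strictMonoOn_Iio hfE hf (ih z hzy) hEz hEx hxz
  exact fun x hx y hy hxy => hmono (y + 1) ⟨hx, hxy.trans (lt_add_one y)⟩ ⟨hy, lt_add_one y⟩ hxy

end StrictMono

theorem stmt18_general (S : Set Ordinal.{0}) (f : Ordinal → Ordinal)
    (hfE : ∀ e ∈ S, IsEpsilon (f e))
    (hf : StrictMonoOn f S) :
    Set.InjOn (subst f) {x : Ordinal | Ep x ⊆ S} :=
  (strictMonoOn_subst hfE hf).injOn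

theorem stmt18 (S : Set Ordinal.{0}) (f : Ordinal → Ordinal)
    (hS : ∀ e ∈ S, IsEpsilon e) (hfE : ∀ e ∈ S, IsEpsilon (f e))
    (hf : StrictMonoOn f S) :
    Set.InjOn (subst f) {x : Ordinal | Ep x ⊆ S} :=
  stmt18_general S f hfE hf
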